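/- Let d ≥ 2 and 0 < δ < 1. There exists C > 0 such that for every integer N ≥ 2: Σ_{j∈ℤ, −δN ≤ j ≤ 0} Σ_{k∈ℤ, −δN ≤ k ≤ 0, k ≠ j} 2^{−j} 2^{−2(d−1)k} ‖φ_j * ( (φ_k(· − 2^{|k|+2N} e_1))² sin²(2^N x_1) )‖_{L^d(A_j)} ≤ C 2^{−d(1−2δ)N}, where A_j := {x ∈ ℝ^d : |x − 2^{|j|+2N} e_1| ≤ 2^{−j}}. -/

import Mathlib

noncomputable section

open MeasureTheory Real Filter
open scoped FourierTransform ENNReal BigOperators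

abbrev Eu (d : ℕ) : Type := EuclideanSpace ℝ (Fin d)

namespace Paper

/-- The first standard basis vector of `ℝ^d`. -/
def e1 (d : ℕ) : Eu d := (WithLp.equiv 2 (Fin d → ℝ)).symm fun i => if (i : ℕ) = 0 then 1 else 0

/-- The first coordinate of a point of `ℝ^d`. -/
def x1 {d : ℕ} (x : Eu d) : ℝ := (inner ℝ x (e1 d) : ℝ)

/-- Convolution of two complex valued functions on `ℝ^d`. -/
def conv {d : ℕ} (f g : Eu d → ℂ) : Eu d → ℂ := fun x => ∫ y, f y * g (x - y)

/-- Partial derivative in the `i`-th coordinate direction. -/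
def pd {d : ℕ} (i : Fin d) (f : Eu d → ℂ) : Eu d → ℂ :=
  fun x => fderiv ℝ f x (EuclideanSpace.single i 1)

/-- Real-valued version of `pd`. -/
def pdR {d : ℕ} (i : Fin d) (f : Eu d → ℝ) : Eu d → ℝ :=
  fun x => fderiv ℝ f x (EuclideanSpace.single i 1)

/-- Littlewood-Paley dilation `φ_j (x) = 2^{dj} φ_0 (2^j x)`. -/
def LP {d : ℕ} (φ0 : Eu d → ℂ) (j : ℤ) : Eu d → ℂ :=
  fun x => (((2 : ℝ) ^ ((d : ℤ) * j) : ℝ) : ℂ) * φ0 (((2 : ℝ) ^ j) • x)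

/-- The homogeneous Besov norm `‖f‖_{Ḃ^s_{p,1}}` (third index `q = 1`). -/
def besov {d : ℕ} (φ0 : Eu d → ℂ) (s : ℝ) (p : ℝ≥0∞) (f : Eu d → ℂ) : ℝ≥0∞ :=
  ∑' j : ℤ, ENNReal.ofReal ((2 : ℝ) ^ (s * (j : ℝ))) * eLpNorm (conv (LP φ0 j) f) p volume

/-- Besov norm of a real-valued function. -/
def besovR {d : ℕ} (φ0 : Eu d → ℂ) (s : ℝ) (p : ℝ≥0∞) (f : Eu d → ℝ) : ℝ≥0∞ :=
  besov φ0 s p (fun x => (f x : ℂ))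

/-- The set of integers `j` with `-δN ≤ j ≤ 0`. -/
def jSet (δ : ℝ) (N : ℕ) : Finset ℤ := Finset.Icc ⌈-(δ * (N : ℝ))⌉ 0

/-- The translation `2^{|j|+2N} e_1`. -/
def shift (d : ℕ) (N : ℕ) (j : ℤ) : Eu d := ((2 : ℝ) ^ (j.natAbs + 2 * N) : ℝ) • e1 d

/-- `R = (log N)⁻¹`. -/
def RN (N : ℕ) : ℝ := (Real.log N)⁻¹

/-- First component of the initial datum `u_{0,N}` (in dimension `d`). -/
def u0c (d : ℕ) (φ0 : Eu d → ℂ) (δ : ℝ) (N : ℕ) : Eu d → ℂ := fun x =>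
  ((RN N * (N : ℝ) ^ (-(1 : ℝ) / (d : ℝ)) * Real.sin ((2 : ℝ) ^ N * x1 x) : ℝ) : ℂ) *
    ∑ j ∈ jSet δ N, (((2 : ℝ) ^ (-((d : ℤ) - 1) * j) : ℝ) : ℂ) * LP φ0 j (x - shift d N j)

/-- The initial velocity field `u_{0,N}`. -/
def u0v (d : ℕ) (φ0 : Eu d → ℂ) (δ : ℝ) (N : ℕ) : Fin d → Eu d → ℂ :=
  fun l x => if (l : ℕ) = 0 then u0c d φ0 δ N x else 0

/-- Heat semigroup `e^{tΔ}` given by convolution with the Gaussian kernel. -/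
def heat {d : ℕ} (t : ℝ) (f : Eu d → ℂ) : Eu d → ℂ :=
  if t = 0 then f else fun x =>
    ∫ y, (((4 * Real.pi * t) ^ (-(d : ℝ) / 2) * Real.exp (-‖x - y‖ ^ 2 / (4 * t)) : ℝ) : ℂ) * f y

/-- Divergence of a vector field. -/
def divg {d : ℕ} (u : Fin d → Eu d → ℂ) : Eu d → ℂ := fun x => ∑ j, pd j (u j) x

/-- Real divergence. -/
def divgR {d : ℕ} (u : Fin d → Eu d → ℝ) : Eu d → ℝ := fun x => ∑ j, pdR j (u j) x

/-- The lattice point `k ∈ ℤ³` seen inside `ℝ³`. -/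
def kv (k : Fin 3 → ℤ) : Eu 3 := (WithLp.equiv 2 (Fin 3 → ℝ)).symm fun i => (k i : ℝ)

/-- The modulation space norm `‖f‖_{M_{3,1}}`. -/
def modNorm (χ : Eu 3 → ℂ) (f : Eu 3 → ℂ) : ℝ≥0∞ :=
  ∑' k : Fin 3 → ℤ, eLpNorm (𝓕⁻ fun ξ => χ (ξ - kv k) * 𝓕 f ξ) 3 volume

/-- Modulation norm of a vector field: sum over the components. -/
def modNormV (χ : Eu 3 → ℂ) (u : Fin 3 → Eu 3 → ℂ) : ℝ≥0∞ := ∑ i, modNorm χ (u i)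

/-- The hypotheses on the window function `χ` defining the modulation norm. -/
structure IsChi (χ : Eu 3 → ℂ) : Prop where
  smooth : ContDiff ℝ (⊤ : ℕ∞) χ
  compact : HasCompactSupport χ
  supp : Function.support χ ⊆ {ξ : Eu 3 | ∀ i : Fin 3, 0 ≤ ξ i ∧ ξ i < 2}
  sum : ∀ ξ : Eu 3, HasSum (fun k : Fin 3 → ℤ => χ (ξ - kv k)) 1

/-- The semigroup `e^{t𝓛}`, `𝓛 = μΔ + (μ+λ)∇div`, defined on the Fourier side. -/
def Lsemi (μ lam t : ℝ) (u : Fin 3 → Eu 3 → ℂ) : Fin 3 → Eu 3 → ℂ := fun i =>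
  𝓕⁻ fun ξ =>
    ((Real.exp (-(t * μ * ‖ξ‖ ^ 2)) : ℝ) : ℂ) *
        (𝓕 (u i) ξ - ((‖ξ‖ ^ 2 : ℝ) : ℂ)⁻¹ * ((ξ i : ℝ) : ℂ) * ∑ j, ((ξ j : ℝ) : ℂ) * 𝓕 (u j) ξ) +
      ((Real.exp (-(t * (2 * μ + lam) * ‖ξ‖ ^ 2)) : ℝ) : ℂ) * ((‖ξ‖ ^ 2 : ℝ) : ℂ)⁻¹ *
        ((ξ i : ℝ) : ℂ) * ∑ j, ((ξ j : ℝ) : ℂ) * 𝓕 (u j) ξ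

/-- The operator `𝓛 = μΔ + (μ+λ)∇div`. -/
def Lop (μ lam : ℝ) (u : Fin 3 → Eu 3 → ℂ) : Fin 3 → Eu 3 → ℂ := fun i x =>
  (μ : ℂ) * ∑ j, pd j (pd j (u i)) x + ((μ + lam : ℝ) : ℂ) * pd i (divg u) x

/-- Real-valued version of `𝓛`. -/
def LopR (μ lam : ℝ) (u : Fin 3 → Eu 3 → ℝ) : Fin 3 → Eu 3 → ℝ := fun i x =>
  μ * ∑ j, pdR j (pdR j (u i)) x + (μ + lam) * pdR i (divgR u) x

/-- The heat semigroup `e^{tκΔ}` on the Fourier side. -/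
def heatF (κ t : ℝ) (f : Eu 3 → ℂ) : Eu 3 → ℂ :=
  𝓕⁻ fun ξ => ((Real.exp (-(κ * t * ‖ξ‖ ^ 2)) : ℝ) : ℂ) * 𝓕 f ξ

/-- `(u·∇)v`. -/
def advect (u v : Fin 3 → Eu 3 → ℂ) : Fin 3 → Eu 3 → ℂ := fun i x => ∑ j, u j x * pd j (v i) x

/-- Deformation tensor `D(u)_{ij}`. -/
def Dten (u : Fin 3 → Eu 3 → ℂ) (i j : Fin 3) : Eu 3 → ℂ := fun x =>
  (pd i (u j) x + pd j (u i) x) / 2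

/-- The quadratic form `2μ tr(D(u)D(v)ᵀ) + λ div u · div v`. -/
def DD (μ lam : ℝ) (u v : Fin 3 → Eu 3 → ℂ) : Eu 3 → ℂ := fun x =>
  2 * (μ : ℂ) * ∑ i, ∑ j, Dten u i j x * Dten v i j x + (lam : ℂ) * divg u x * divg v x

end Paper
namespace Paper

/-- The first Picard iterate `U_1(t) = e^{t𝓛} u_0`. -/
def U1 (μ lam : ℝ) (u0 : Fin 3 → Eu 3 → ℂ) (t : ℝ) : Fin 3 → Eu 3 → ℂ := Lsemi μ lam t u0

/-- The first Picard iterate `P_1(t) = -∫_0^t div U_1(s) ds`. -/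
def P1 (μ lam : ℝ) (u0 : Fin 3 → Eu 3 → ℂ) (t : ℝ) : Eu 3 → ℂ := fun x =>
  -∫ s in (0 : ℝ)..t, divg (U1 μ lam u0 s) x

/-- The second Picard iterate `Θ_2`. -/
def Θ2 (μ lam κ : ℝ) (u0 : Fin 3 → Eu 3 → ℂ) (t : ℝ) : Eu 3 → ℂ := fun x =>
  ∫ s in (0 : ℝ)..t, heatF κ (t - s) (DD μ lam (U1 μ lam u0 s) (U1 μ lam u0 s)) x

/-- The second Picard iterate `U_2`. -/
def U2 (μ lam κ : ℝ) (u0 : Fin 3 → Eu 3 → ℂ) (t : ℝ) : Fin 3 → Eu 3 → ℂ := fun i x =>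
  ∫ s in (0 : ℝ)..t,
    Lsemi μ lam (t - s)
      (fun i' y =>
        -advect (U1 μ lam u0 s) (U1 μ lam u0 s) i' y - pd i' (Θ2 μ lam κ u0 s) y -
          P1 μ lam u0 s y * deriv (fun τ => U1 μ lam u0 τ i' y) s) i x

/-- The second Picard iterate `P_2`. -/
def P2 (μ lam κ : ℝ) (u0 : Fin 3 → Eu 3 → ℂ) (t : ℝ) : Eu 3 → ℂ := fun x =>
  -∫ s in (0 : ℝ)..t,
    (divg (U2 μ lam κ u0 s) x + divg (fun j y => P1 μ lam u0 s y * U1 μ lam u0 s j y) x)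

/-- The Picard expansion `(P_k, U_k, Θ_k)_{k ≥ 0}` associated with the data `(0, u_0, 0)`. -/
structure IsPicard (μ lam κ : ℝ) (u0 : Fin 3 → Eu 3 → ℂ) (P : ℕ → ℝ → Eu 3 → ℂ)
    (U : ℕ → ℝ → Fin 3 → Eu 3 → ℂ) (Θ : ℕ → ℝ → Eu 3 → ℂ) : Prop where
  hP0 : ∀ t, P 0 t = 0
  hU0 : ∀ t, U 0 t = 0
  hΘ0 : ∀ t, Θ 0 t = 0
  hΘ1 : ∀ t, Θ 1 t = 0
  hU1 : ∀ t, U 1 t = U1 μ lam u0 t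
  hP1 : ∀ t, P 1 t = P1 μ lam u0 t
  hΘ2 : ∀ t, Θ 2 t = Θ2 μ lam κ u0 t
  hU2 : ∀ t, U 2 t = U2 μ lam κ u0 t
  hP2 : ∀ t, P 2 t = P2 μ lam κ u0 t
  hPk : ∀ k, 3 ≤ k → ∀ t x, P k t x =
    -∫ s in (0 : ℝ)..t,
      (divg (U k s) x +
        ∑ k1 ∈ Finset.Ioo 0 k, divg (fun j y => P k1 s y * U (k - k1) s j y) x)
  hUk : ∀ k, 3 ≤ k → ∀ t i x, U k t i x =
    ∫ s in (0 : ℝ)..t,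
      Lsemi μ lam (t - s)
        (fun i' y =>
          -(∑ k1 ∈ Finset.Ioo 0 k, advect (U k1 s) (U (k - k1) s) i' y) -
            (∑ k1 ∈ Finset.Ioo 0 k, ∑ k2 ∈ Finset.Ioo 0 (k - k1),
              P (k - k1 - k2) s y * advect (U k1 s) (U k2 s) i' y) -
            pd i' (fun z => Θ k s z + ∑ k1 ∈ Finset.Ioo 0 k, P k1 s z * Θ (k - k1) s z) y -
            ∑ k1 ∈ Finset.Ioo 0 k, P k1 s y * deriv (fun τ => U (k - k1) τ i' y) s) i x
  hΘk : ∀ k, 3 ≤ k → ∀ t x, Θ k t x =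
    ∫ s in (0 : ℝ)..t,
      heatF κ (t - s)
        (fun y =>
          -(∑ k1 ∈ Finset.Ioo 0 k, ∑ j, U k1 s j y * pd j (Θ (k - k1) s) y) -
            (∑ k1 ∈ Finset.Ioo 0 k, ∑ k2 ∈ Finset.Ioo 0 (k - k1),
              P (k - k1 - k2) s y * ∑ j, U k1 s j y * pd j (Θ k2 s) y) -
            (∑ k1 ∈ Finset.Ioo 0 k, Θ k1 s y * divg (U (k - k1) s) y) -
            (∑ k1 ∈ Finset.Ioo 0 k, ∑ k2 ∈ Finset.Ioo 0 (k - k1),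
              P (k - k1 - k2) s y * Θ k1 s y * divg (U k2 s) y) -
            (∑ k1 ∈ Finset.Ioo 0 k, P k1 s y * deriv (fun τ => Θ (k - k1) τ y) s) +
            ∑ k1 ∈ Finset.Ioo 0 k, DD μ lam (U k1 s) (U (k - k1) s) y) x

end Paper

namespace Paper

/-- Schwartz decay in the convenient form. -/
lemma schwartz_decay_bound {d : ℕ} (φ0 : SchwartzMap (Eu d) ℂ) (m : ℕ) :
    ∃ A : ℝ, 1 ≤ A ∧ ∀ z : Eu d, ‖φ0 z‖ ≤ A * ((1 + ‖z‖) ^ m)⁻¹ := by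
  obtain ⟨C0, hC0⟩ := φ0.decay 0 0
  obtain ⟨Cm, hCm⟩ := φ0.decay m 0
  replace hC0 := hC0.2
  replace hCm := hCm.2
  refine ⟨max 1 (2 ^ m * (C0 + Cm)), le_max_left _ _, fun z => ?_⟩
  have hz : (0:ℝ) ≤ ‖z‖ := norm_nonneg z
  have h0 := hC0 z
  have hm := hCm z
  rw [norm_iteratedFDeriv_zero] at h0 hm
  simp only [pow_zero, one_mul] at h0
  have hpos : (0:ℝ) < (1 + ‖z‖) ^ m := by positivity
  rw [← div_eq_mul_inv, le_div_iff₀ hpos]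
  have h1 : (1 + ‖z‖) ^ m ≤ 2 ^ m * (1 + ‖z‖ ^ m) := by
    calc (1 + ‖z‖) ^ m ≤ (2 * max 1 ‖z‖) ^ m := by
          apply pow_le_pow_left₀ (by positivity)
          rcases le_total ‖z‖ 1 with h | h
          · rw [max_eq_left h]; linarith
          · rw [max_eq_right h]; linarith
      _ = 2 ^ m * (max 1 ‖z‖) ^ m := by rw [mul_pow]
      _ ≤ 2 ^ m * (1 + ‖z‖ ^ m) := by
          apply mul_le_mul_of_nonneg_left _ (by positivity)
          rcases le_total ‖z‖ 1 with h | h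
          · rw [max_eq_left h]; simp
          · rw [max_eq_right h]; nlinarith [pow_nonneg hz m]
  calc ‖φ0 z‖ * (1 + ‖z‖) ^ m ≤ ‖φ0 z‖ * (2 ^ m * (1 + ‖z‖ ^ m)) :=
        mul_le_mul_of_nonneg_left h1 (norm_nonneg _)
    _ = 2 ^ m * (‖φ0 z‖ + ‖z‖ ^ m * ‖φ0 z‖) := by ring
    _ ≤ 2 ^ m * (C0 + Cm) := by
        apply mul_le_mul_of_nonneg_left _ (by positivity)
        exact add_le_add h0 hm
    _ ≤ max 1 (2 ^ m * (C0 + Cm)) := le_max_right _ _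

/-- Peetre-type product estimate. -/
lemma prod_decay {m : ℕ} {a b c : ℝ} (ha : 0 ≤ a) (hb : 0 ≤ b) (hc : 0 ≤ c) (hcab : c ≤ a + b) :
    ((1 + a) ^ (2 * m))⁻¹ * ((1 + b) ^ (2 * m))⁻¹ ≤ ((1 + c) ^ m)⁻¹ * ((1 + a) ^ m)⁻¹ := by
  have h1a : (0:ℝ) < 1 + a := by linarith
  have h1b : (0:ℝ) < 1 + b := by linarith
  have h1c : (0:ℝ) < 1 + c := by linarith
  rw [← mul_inv, ← mul_inv]
  apply inv_anti₀ (by positivity)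
  have hb1 : (1:ℝ) ≤ (1 + b) ^ m := one_le_pow₀ (by linarith)
  calc (1 + c) ^ m * (1 + a) ^ m
      ≤ ((1 + a) * (1 + b)) ^ m * (1 + a) ^ m := by
        apply mul_le_mul_of_nonneg_right _ (by positivity)
        apply pow_le_pow_left₀ h1c.le
        nlinarith
    _ ≤ ((1 + a) * (1 + b)) ^ m * ((1 + a) ^ m * (1 + b) ^ m) := by
        apply mul_le_mul_of_nonneg_left _ (by positivity)
        nlinarith [pow_pos h1a m]
    _ = (1 + a) ^ (2 * m) * (1 + b) ^ (2 * m) := by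
        rw [mul_pow, two_mul, pow_add, pow_add]; ring

lemma one_add_mul_inv_le {m d : ℕ} (hm : d + 1 ≤ m) {t r : ℝ} (ht0 : 0 < t) (ht1 : t ≤ 1)
    (hr : 0 ≤ r) :
    ((1 + t * r) ^ m)⁻¹ ≤ (t ^ (d + 1))⁻¹ * ((1 + r) ^ (d + 1))⁻¹ := by
  have h1 : (0:ℝ) < 1 + t * r := by nlinarith
  rw [← mul_inv]
  apply inv_anti₀ (by positivity)
  calc t ^ (d+1) * (1 + r) ^ (d+1) = (t * (1 + r)) ^ (d+1) := (mul_pow _ _ _).symm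
    _ ≤ (1 + t * r) ^ (d+1) := by
        apply pow_le_pow_left₀ (by positivity)
        nlinarith
    _ ≤ (1 + t * r) ^ m := pow_le_pow_right₀ (by nlinarith) hm

lemma integrable_japanese (d : ℕ) :
    Integrable (fun y : Eu d => (((1:ℝ) + ‖y‖) ^ (d + 1))⁻¹) := by
  have h := integrable_one_add_norm (E := Eu d) (μ := volume) (r := (d + 1 : ℝ))
    (by rw [finrank_euclideanSpace_fin]; norm_num)
  refine h.congr (Eventually.of_forall fun y => ?_)
  have h1 : (0:ℝ) < 1 + ‖y‖ := by positivity
  show (1 + ‖y‖) ^ (-((d:ℝ) + 1)) = ((1 + ‖y‖) ^ (d + 1))⁻¹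
  rw [Real.rpow_neg h1.le, ← Real.rpow_natCast (1 + ‖y‖) (d+1)]
  push_cast
  ring_nf

lemma LP_norm_le {d : ℕ} {φ0 : SchwartzMap (Eu d) ℂ} {m : ℕ} {A : ℝ}
    (hA : ∀ z : Eu d, ‖φ0 z‖ ≤ A * ((1 + ‖z‖) ^ m)⁻¹) (hA1 : 1 ≤ A)
    {j : ℤ} (hj : j ≤ 0) {t : ℝ} (ht0 : 0 < t) (ht : t ≤ (2:ℝ) ^ j) (y : Eu d) :
    ‖LP (⇑φ0) j y‖ ≤ A * ((1 + t * ‖y‖) ^ m)⁻¹ := by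
  have hy : (0:ℝ) ≤ ‖y‖ := norm_nonneg y
  have hpj : (0:ℝ) < (2:ℝ) ^ j := by positivity
  have h2 : ‖((2:ℝ) ^ j) • y‖ = (2:ℝ) ^ j * ‖y‖ := by
    rw [norm_smul, Real.norm_eq_abs, abs_of_pos hpj]
  have h3 : ‖LP (⇑φ0) j y‖ = (2:ℝ) ^ ((d:ℤ) * j) * ‖φ0 (((2:ℝ) ^ j) • y)‖ := by
    unfold LP
    rw [norm_mul, Complex.norm_real, Real.norm_eq_abs, abs_of_pos (by positivity)]
  rw [h3]
  have h4 : (2:ℝ) ^ ((d:ℤ) * j) ≤ 1 :=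
    zpow_le_one_of_nonpos₀ one_le_two (mul_nonpos_of_nonneg_of_nonpos (by positivity) hj)
  calc (2:ℝ) ^ ((d:ℤ) * j) * ‖φ0 (((2:ℝ) ^ j) • y)‖ ≤ 1 * ‖φ0 (((2:ℝ) ^ j) • y)‖ := by
        apply mul_le_mul_of_nonneg_right h4 (norm_nonneg _)
    _ = ‖φ0 (((2:ℝ) ^ j) • y)‖ := one_mul _
    _ ≤ A * ((1 + ‖((2:ℝ) ^ j) • y‖) ^ m)⁻¹ := hA _
    _ ≤ A * ((1 + t * ‖y‖) ^ m)⁻¹ := by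
        apply mul_le_mul_of_nonneg_left _ (by linarith)
        apply inv_anti₀ (by positivity)
        apply pow_le_pow_left₀ (by positivity)
        rw [h2]
        nlinarith

lemma norm_e1 {d : ℕ} (hd : 1 ≤ d) : ‖e1 d‖ = 1 := by
  have h0 : (0:ℕ) < d := hd
  have he : e1 d = EuclideanSpace.single (⟨0, h0⟩ : Fin d) (1:ℝ) := by
    unfold e1 EuclideanSpace.single
    ext i
    rw [PiLp.single_apply]
    show (if (i:ℕ) = 0 then (1:ℝ) else 0) = _
    by_cases h : (i:ℕ) = 0
    · rw [if_pos h, if_pos (Fin.ext h)]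
    · rw [if_neg h, if_neg (fun hh => h (by rw [hh]))]
  rw [he, EuclideanSpace.norm_single]
  norm_num

lemma two_pow_dist {p q : ℕ} (h : p ≠ q) (L : ℕ) :
    (2:ℝ) ^ L ≤ |(2:ℝ) ^ (p + L) - (2:ℝ) ^ (q + L)| := by
  have key : ∀ p q : ℕ, p < q → (2:ℝ) ^ L ≤ (2:ℝ) ^ (q + L) - (2:ℝ) ^ (p + L) := by
    intro p q hpq
    have h1 : (2:ℝ) ^ (p + L) * 2 ≤ (2:ℝ) ^ (q + L) := by
      rw [← pow_succ]
      exact pow_le_pow_right₀ one_le_two (by omega)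
    have h2 : (2:ℝ) ^ L ≤ (2:ℝ) ^ (p + L) := pow_le_pow_right₀ one_le_two (by omega)
    linarith
  rcases h.lt_or_gt with hl | hl
  · rw [abs_sub_comm, abs_of_nonneg (by linarith [key p q hl, pow_pos (by norm_num : (0:ℝ) < 2) L])]
    exact key p q hl
  · rw [abs_of_nonneg (by linarith [key q p hl, pow_pos (by norm_num : (0:ℝ) < 2) L])]
    exact key q p hl

lemma shift_dist {d : ℕ} (hd : 1 ≤ d) {N : ℕ} {j k : ℤ} (hjk : j ≠ k) (hj : j ≤ 0) (hk : k ≤ 0) :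
    (2:ℝ) ^ (2 * N) ≤ ‖shift d N j - shift d N k‖ := by
  have hab : j.natAbs ≠ k.natAbs := fun h => hjk (by omega)
  have h1 : shift d N j - shift d N k
      = (((2:ℝ) ^ (j.natAbs + 2 * N)) - ((2:ℝ) ^ (k.natAbs + 2 * N))) • e1 d := by
    unfold shift; rw [sub_smul]
  rw [h1, norm_smul, Real.norm_eq_abs, norm_e1 hd, mul_one]
  exact two_pow_dist hab (2 * N)

lemma conv_pointwise_bound {d : ℕ} (φ0 : SchwartzMap (Eu d) ℂ)
    {A : ℝ} (hA1 : 1 ≤ A) {m : ℕ} (hm : d + 1 ≤ m)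
    (hA : ∀ z : Eu d, ‖φ0 z‖ ≤ A * ((1 + ‖z‖) ^ (2 * m))⁻¹)
    {j k : ℤ} (hj : j ≤ 0) (hk : k ≤ 0) {t : ℝ} (ht0 : 0 < t) (ht1 : t ≤ 1)
    (htj : t ≤ (2:ℝ) ^ j) (htk : t ≤ (2:ℝ) ^ k) (c : Eu d) (w : ℝ) (x : Eu d) :
    ‖conv (LP (⇑φ0) j)
        (fun x' => LP (⇑φ0) k (x' - c) ^ 2 * ((Real.sin (w * x1 x') : ℝ) : ℂ) ^ 2) x‖
      ≤ A ^ 3 * ((1 + t * ‖x - c‖) ^ m)⁻¹ * (t ^ (d + 1))⁻¹ *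
        ∫ y : Eu d, (((1:ℝ) + ‖y‖) ^ (d + 1))⁻¹ := by
  have hI : Integrable (fun y : Eu d => (((1:ℝ) + ‖y‖) ^ (d + 1))⁻¹) := integrable_japanese d
  set B : ℝ := A ^ 3 * ((1 + t * ‖x - c‖) ^ m)⁻¹ * (t ^ (d + 1))⁻¹ with hB
  have hB0 : 0 ≤ B := by positivity
  have key : ∀ y : Eu d,
      ‖LP (⇑φ0) j y * (LP (⇑φ0) k ((x - y) - c) ^ 2 *
        ((Real.sin (w * x1 (x - y)) : ℝ) : ℂ) ^ 2)‖ ≤ B * (((1:ℝ) + ‖y‖) ^ (d + 1))⁻¹ := by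
    intro y
    have hy : (0:ℝ) ≤ ‖y‖ := norm_nonneg y
    have hz : (0:ℝ) ≤ ‖x - y - c‖ := norm_nonneg _
    have hxc : (0:ℝ) ≤ ‖x - c‖ := norm_nonneg _
    have hsin : ‖((Real.sin (w * x1 (x - y)) : ℝ) : ℂ) ^ 2‖ ≤ 1 := by
      rw [norm_pow, Complex.norm_real, Real.norm_eq_abs]
      have := abs_sin_le_one (w * x1 (x - y))
      nlinarith [abs_nonneg (Real.sin (w * x1 (x - y)))]
    have h1 : ‖LP (⇑φ0) j y‖ ≤ A * ((1 + t * ‖y‖) ^ (2 * m))⁻¹ :=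
      LP_norm_le hA hA1 hj ht0 htj y
    have h2 : ‖LP (⇑φ0) k ((x - y) - c)‖ ≤ A * ((1 + t * ‖x - y - c‖) ^ (2 * m))⁻¹ :=
      LP_norm_le hA hA1 hk ht0 htk _
    have hu1 : ((1 + t * ‖y‖) ^ (2 * m))⁻¹ ≤ 1 := by
      rw [inv_le_one_iff₀]; right
      exact one_le_pow₀ (by nlinarith)
    have hu2 : ((1 + t * ‖x - y - c‖) ^ (2 * m))⁻¹ ≤ 1 := by
      rw [inv_le_one_iff₀]; right
      exact one_le_pow₀ (by nlinarith)
    have hu2p : (0:ℝ) ≤ ((1 + t * ‖x - y - c‖) ^ (2 * m))⁻¹ := by positivity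
    have hsq : ‖LP (⇑φ0) k ((x - y) - c) ^ 2‖
        ≤ A ^ 2 * ((1 + t * ‖x - y - c‖) ^ (2 * m))⁻¹ := by
      rw [norm_pow]
      calc ‖LP (⇑φ0) k ((x - y) - c)‖ ^ 2
          ≤ (A * ((1 + t * ‖x - y - c‖) ^ (2 * m))⁻¹) ^ 2 := by
            apply pow_le_pow_left₀ (norm_nonneg _) h2
        _ = A ^ 2 * (((1 + t * ‖x - y - c‖) ^ (2 * m))⁻¹ *
              ((1 + t * ‖x - y - c‖) ^ (2 * m))⁻¹) := by ring
        _ ≤ A ^ 2 * (1 * ((1 + t * ‖x - y - c‖) ^ (2 * m))⁻¹) := by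
            apply mul_le_mul_of_nonneg_left _ (by positivity)
            apply mul_le_mul_of_nonneg_right hu2 hu2p
        _ = A ^ 2 * ((1 + t * ‖x - y - c‖) ^ (2 * m))⁻¹ := by ring
    have htri : t * ‖x - c‖ ≤ t * ‖y‖ + t * ‖x - y - c‖ := by
      have : ‖x - c‖ ≤ ‖y‖ + ‖x - y - c‖ := by
        have hxy : x - c = y + (x - y - c) := by abel
        calc ‖x - c‖ = ‖y + (x - y - c)‖ := by rw [← hxy]
          _ ≤ ‖y‖ + ‖x - y - c‖ := norm_add_le _ _
      nlinarith
    have hpd : ((1 + t * ‖y‖) ^ (2 * m))⁻¹ * ((1 + t * ‖x - y - c‖) ^ (2 * m))⁻¹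
        ≤ ((1 + t * ‖x - c‖) ^ m)⁻¹ * ((1 + t * ‖y‖) ^ m)⁻¹ :=
      prod_decay (by positivity) (by positivity) (by positivity) htri
    have hjap : ((1 + t * ‖y‖) ^ m)⁻¹ ≤ (t ^ (d + 1))⁻¹ * ((1 + ‖y‖) ^ (d + 1))⁻¹ :=
      one_add_mul_inv_le hm ht0 ht1 hy
    calc ‖LP (⇑φ0) j y * (LP (⇑φ0) k ((x - y) - c) ^ 2 *
          ((Real.sin (w * x1 (x - y)) : ℝ) : ℂ) ^ 2)‖
        = ‖LP (⇑φ0) j y‖ * (‖LP (⇑φ0) k ((x - y) - c) ^ 2‖ *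
            ‖((Real.sin (w * x1 (x - y)) : ℝ) : ℂ) ^ 2‖) := by
          rw [norm_mul, norm_mul]
      _ ≤ (A * ((1 + t * ‖y‖) ^ (2 * m))⁻¹) *
            ((A ^ 2 * ((1 + t * ‖x - y - c‖) ^ (2 * m))⁻¹) * 1) := by
          apply mul_le_mul h1 _ (by positivity) (by positivity)
          apply mul_le_mul hsq hsin (norm_nonneg _) (by positivity)
      _ = A ^ 3 * (((1 + t * ‖y‖) ^ (2 * m))⁻¹ * ((1 + t * ‖x - y - c‖) ^ (2 * m))⁻¹) := by
          ring
      _ ≤ A ^ 3 * (((1 + t * ‖x - c‖) ^ m)⁻¹ * ((1 + t * ‖y‖) ^ m)⁻¹) := by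
          apply mul_le_mul_of_nonneg_left hpd (by positivity)
      _ ≤ A ^ 3 * (((1 + t * ‖x - c‖) ^ m)⁻¹ * ((t ^ (d + 1))⁻¹ * ((1 + ‖y‖) ^ (d + 1))⁻¹)) := by
          apply mul_le_mul_of_nonneg_left _ (by positivity)
          apply mul_le_mul_of_nonneg_left hjap (by positivity)
      _ = B * (((1:ℝ) + ‖y‖) ^ (d + 1))⁻¹ := by rw [hB]; ring
  calc ‖conv (LP (⇑φ0) j)
        (fun x' => LP (⇑φ0) k (x' - c) ^ 2 * ((Real.sin (w * x1 x') : ℝ) : ℂ) ^ 2) x‖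
      ≤ ∫ y, ‖LP (⇑φ0) j y * (LP (⇑φ0) k ((x - y) - c) ^ 2 *
          ((Real.sin (w * x1 (x - y)) : ℝ) : ℂ) ^ 2)‖ :=
        norm_integral_le_integral_norm _
    _ ≤ ∫ y : Eu d, B * (((1:ℝ) + ‖y‖) ^ (d + 1))⁻¹ := by
        apply integral_mono_of_nonneg (Eventually.of_forall fun y => norm_nonneg _)
          (hI.const_mul B) (Eventually.of_forall key)
    _ = B * ∫ y : Eu d, (((1:ℝ) + ‖y‖) ^ (d + 1))⁻¹ := integral_const_mul _ _

lemma per_term_bound {d : ℕ} (hd : 2 ≤ d) (φ0 : SchwartzMap (Eu d) ℂ)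
    {A : ℝ} (hA1 : 1 ≤ A) {m : ℕ} (hm : d + 1 ≤ m)
    (hA : ∀ z : Eu d, ‖φ0 z‖ ≤ A * ((1 + ‖z‖) ^ (2 * m))⁻¹)
    {N : ℕ} (hN : 2 ≤ N) {j k : ℤ} (hjN : -(N:ℤ) ≤ j) (hj : j ≤ 0)
    (hkN : -(N:ℤ) ≤ k) (hk : k ≤ 0) (hjk : j ≠ k) :
    ENNReal.ofReal ((2:ℝ) ^ (-j) * (2:ℝ) ^ (-2 * ((d:ℤ) - 1) * k)) *
      eLpNorm (conv (LP (⇑φ0) j) fun x => LP (⇑φ0) k (x - shift d N k) ^ 2 *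
          ((Real.sin ((2:ℝ) ^ N * x1 x) : ℝ) : ℂ) ^ 2) d
        (volume.restrict (Metric.closedBall (shift d N j) ((2:ℝ) ^ (-j))))
      ≤ ENNReal.ofReal (((volume (Metric.ball (0:Eu d) 1)).toReal + 1) * A ^ 3 *
          (∫ y : Eu d, (((1:ℝ) + ‖y‖) ^ (d + 1))⁻¹) * 2 ^ (d + 1) * 2 ^ (2 * m) *
          2 ^ (4 * d * N) * ((2:ℝ) ^ (m * N))⁻¹) := by
  have hd1 : 1 ≤ d := by omega
  have h2ne : (2:ℝ) ≠ 0 := by norm_num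
  have hA0 : (0:ℝ) ≤ A := by linarith
  set Vr : ℝ := (volume (Metric.ball (0:Eu d) 1)).toReal with hVr_def
  have hVr0 : 0 ≤ Vr := ENNReal.toReal_nonneg
  set I : ℝ := ∫ y : Eu d, (((1:ℝ) + ‖y‖) ^ (d + 1))⁻¹ with hI_def
  have hI0 : 0 ≤ I := integral_nonneg fun y => by positivity
  set t : ℝ := (2:ℝ) ^ (-((N:ℤ) + 1)) with ht_def
  have ht0 : 0 < t := by positivity
  have ht1 : t ≤ 1 := zpow_le_one_of_nonpos₀ one_le_two (by omega)
  have htj : t ≤ (2:ℝ) ^ j := zpow_le_zpow_right₀ one_le_two (by omega)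
  have htk : t ≤ (2:ℝ) ^ k := zpow_le_zpow_right₀ one_le_two (by omega)
  set PB : ℝ := A ^ 3 * (((2:ℝ) ^ ((N:ℤ) - 2)) ^ m)⁻¹ * (t ^ (d + 1))⁻¹ * I with hPB_def
  -- pointwise bound on the ball
  have hball : ∀ x ∈ Metric.closedBall (shift d N j) ((2:ℝ) ^ (-j)),
      ‖conv (LP (⇑φ0) j) (fun x' => LP (⇑φ0) k (x' - shift d N k) ^ 2 *
        ((Real.sin ((2:ℝ) ^ N * x1 x') : ℝ) : ℂ) ^ 2) x‖ ≤ PB := by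
    intro x hx
    have hbase := conv_pointwise_bound φ0 hA1 hm hA hj hk ht0 ht1 htj htk
      (shift d N k) ((2:ℝ) ^ N) x
    refine hbase.trans ?_
    rw [hPB_def]
    have hsjk : (2:ℝ) ^ (2 * N) ≤ ‖shift d N j - shift d N k‖ := shift_dist hd1 hjk hj hk
    have hxj : ‖x - shift d N j‖ ≤ (2:ℝ) ^ (-j) := by
      rw [← dist_eq_norm]; exact Metric.mem_closedBall.mp hx
    have hxjN : ‖x - shift d N j‖ ≤ (2:ℝ) ^ ((N:ℤ)) :=
      hxj.trans (zpow_le_zpow_right₀ one_le_two (by omega))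
    have htri : ‖shift d N j - shift d N k‖ ≤ ‖x - shift d N j‖ + ‖x - shift d N k‖ := by
      have hre : shift d N j - shift d N k = -(x - shift d N j) + (x - shift d N k) := by abel
      rw [hre]
      exact (norm_add_le _ _).trans (by rw [norm_neg])
    have hxk : (2:ℝ) ^ (2 * N) - (2:ℝ) ^ ((N:ℤ)) ≤ ‖x - shift d N k‖ := by linarith
    have hnn : (2:ℝ) ^ ((N:ℤ) - 2) ≤ 1 + t * ‖x - shift d N k‖ := by
      have e1 : t * (2:ℝ) ^ ((2 * N : ℕ) : ℤ) = (2:ℝ) ^ ((N:ℤ) - 1) := by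
        rw [ht_def, ← zpow_add₀ h2ne]; congr 1; push_cast; ring
      have e2 : t * (2:ℝ) ^ ((N:ℤ)) = (2:ℝ) ^ (-1 : ℤ) := by
        rw [ht_def, ← zpow_add₀ h2ne]; congr 1; ring
      have e3 : (2:ℝ) ^ ((N:ℤ) - 1) = 2 * (2:ℝ) ^ ((N:ℤ) - 2) := by
        rw [show (N:ℤ) - 1 = 1 + ((N:ℤ) - 2) by ring, zpow_add₀ h2ne]; norm_num
      have e4 : (2:ℝ) ^ (-1 : ℤ) ≤ (2:ℝ) ^ ((N:ℤ) - 2) :=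
        zpow_le_zpow_right₀ one_le_two (by omega)
      have h5 : t * ((2:ℝ) ^ (2 * N) - (2:ℝ) ^ ((N:ℤ))) ≤ t * ‖x - shift d N k‖ :=
        mul_le_mul_of_nonneg_left hxk ht0.le
      rw [mul_sub] at h5
      rw [← zpow_natCast (2:ℝ) (2 * N), e1, e2, e3] at h5
      linarith
    have hmono : ((1 + t * ‖x - shift d N k‖) ^ m)⁻¹ ≤ (((2:ℝ) ^ ((N:ℤ) - 2)) ^ m)⁻¹ := by
      apply inv_anti₀ (by positivity)
      exact pow_le_pow_left₀ (by positivity) hnn m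
    have : A ^ 3 * ((1 + t * ‖x - shift d N k‖) ^ m)⁻¹
        ≤ A ^ 3 * (((2:ℝ) ^ ((N:ℤ) - 2)) ^ m)⁻¹ :=
      mul_le_mul_of_nonneg_left hmono (by positivity)
    have h6 : A ^ 3 * ((1 + t * ‖x - shift d N k‖) ^ m)⁻¹ * (t ^ (d + 1))⁻¹
        ≤ A ^ 3 * (((2:ℝ) ^ ((N:ℤ) - 2)) ^ m)⁻¹ * (t ^ (d + 1))⁻¹ :=
      mul_le_mul_of_nonneg_right this (by positivity)
    exact mul_le_mul_of_nonneg_right h6 hI0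
  have hPB0 : 0 ≤ PB := by rw [hPB_def]; positivity
  -- eLpNorm bound
  have hae : ∀ᵐ x ∂(volume.restrict (Metric.closedBall (shift d N j) ((2:ℝ) ^ (-j)))),
      ‖conv (LP (⇑φ0) j) (fun x' => LP (⇑φ0) k (x' - shift d N k) ^ 2 *
        ((Real.sin ((2:ℝ) ^ N * x1 x') : ℝ) : ℂ) ^ 2) x‖ ≤ PB :=
    ae_restrict_of_forall_mem measurableSet_closedBall hball
  have hsnorm := eLpNorm_le_of_ae_bound (p := (d : ℝ≥0∞)) hae
  rw [Measure.restrict_apply_univ] at hsnorm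
  -- volume of the ball
  set s : ℝ := ((2:ℝ) ^ ((N:ℤ))) ^ d * (Vr + 1) with hs_def
  have hs1 : (1:ℝ) ≤ s := by
    rw [hs_def]
    have h1 : (1:ℝ) ≤ (2:ℝ) ^ ((N:ℤ)) := one_le_zpow₀ one_le_two (by omega)
    nlinarith [one_le_pow₀ h1 (n := d)]
  have hvol : volume (Metric.closedBall (shift d N j) ((2:ℝ) ^ (-j))) ≤ ENNReal.ofReal s := by
    rw [Measure.addHaar_closedBall volume (shift d N j) (by positivity : (0:ℝ) ≤ (2:ℝ) ^ (-j)),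
      finrank_euclideanSpace_fin]
    have hb : volume (Metric.ball (0:Eu d) 1) = ENNReal.ofReal Vr :=
      (ENNReal.ofReal_toReal measure_ball_lt_top.ne).symm
    rw [hb, ← ENNReal.ofReal_mul (by positivity)]
    apply ENNReal.ofReal_le_ofReal
    rw [hs_def]
    have h1 : ((2:ℝ) ^ (-j)) ^ d ≤ ((2:ℝ) ^ ((N:ℤ))) ^ d :=
      pow_le_pow_left₀ (by positivity) (zpow_le_zpow_right₀ one_le_two (by omega)) d
    nlinarith [pow_nonneg (by positivity : (0:ℝ) ≤ (2:ℝ) ^ (-j)) d]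
  have hrp : (volume (Metric.closedBall (shift d N j) ((2:ℝ) ^ (-j)))) ^ ((d : ℝ≥0∞)).toReal⁻¹
      ≤ ENNReal.ofReal s := by
    have hd0 : (1:ℝ) ≤ (d:ℝ) := by exact_mod_cast hd1
    calc (volume (Metric.closedBall (shift d N j) ((2:ℝ) ^ (-j)))) ^ ((d : ℝ≥0∞)).toReal⁻¹
        ≤ (ENNReal.ofReal s) ^ ((d : ℝ≥0∞)).toReal⁻¹ := by
          apply ENNReal.rpow_le_rpow hvol
          simp only [ENNReal.toReal_natCast]
          positivity
      _ ≤ (ENNReal.ofReal s) ^ (1:ℝ) := by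
          apply ENNReal.rpow_le_rpow_of_exponent_le (by exact ENNReal.one_le_ofReal.mpr hs1)
          simp only [ENNReal.toReal_natCast]
          rw [inv_le_one_iff₀]; right; exact hd0
      _ = ENNReal.ofReal s := ENNReal.rpow_one _
  -- weight bound and final assembly
  have hw0 : (0:ℝ) ≤ (2:ℝ) ^ (-j) * (2:ℝ) ^ (-2 * ((d:ℤ) - 1) * k) := by positivity
  calc ENNReal.ofReal ((2:ℝ) ^ (-j) * (2:ℝ) ^ (-2 * ((d:ℤ) - 1) * k)) *
      eLpNorm (conv (LP (⇑φ0) j) fun x => LP (⇑φ0) k (x - shift d N k) ^ 2 *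
          ((Real.sin ((2:ℝ) ^ N * x1 x) : ℝ) : ℂ) ^ 2) d
        (volume.restrict (Metric.closedBall (shift d N j) ((2:ℝ) ^ (-j))))
      ≤ ENNReal.ofReal ((2:ℝ) ^ (-j) * (2:ℝ) ^ (-2 * ((d:ℤ) - 1) * k)) *
        (ENNReal.ofReal s * ENNReal.ofReal PB) := by
        apply mul_le_mul_right
        exact hsnorm.trans (mul_le_mul_left hrp _)
    _ = ENNReal.ofReal (((2:ℝ) ^ (-j) * (2:ℝ) ^ (-2 * ((d:ℤ) - 1) * k)) * (s * PB)) := by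
        rw [← ENNReal.ofReal_mul (by linarith : (0:ℝ) ≤ s), ← ENNReal.ofReal_mul hw0]
    _ ≤ ENNReal.ofReal ((Vr + 1) * A ^ 3 * I * 2 ^ (d + 1) * 2 ^ (2 * m) *
          2 ^ (4 * d * N) * ((2:ℝ) ^ (m * N))⁻¹) := by
        apply ENNReal.ofReal_le_ofReal
        have hwj : (2:ℝ) ^ (-j) ≤ (2:ℝ) ^ ((N:ℤ)) := zpow_le_zpow_right₀ one_le_two (by omega)
        have hwk : (2:ℝ) ^ (-2 * ((d:ℤ) - 1) * k) ≤ (2:ℝ) ^ (2 * ((d:ℤ) - 1) * N) := by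
          apply zpow_le_zpow_right₀ one_le_two
          have h1 : (0:ℤ) ≤ 2 * ((d:ℤ) - 1) := by omega
          nlinarith
        have hsPB : 0 ≤ s * PB := mul_nonneg (by linarith) hPB0
        have step1 : ((2:ℝ) ^ (-j) * (2:ℝ) ^ (-2 * ((d:ℤ) - 1) * k)) * (s * PB)
            ≤ ((2:ℝ) ^ ((N:ℤ)) * (2:ℝ) ^ (2 * ((d:ℤ) - 1) * N)) * (s * PB) := by
          apply mul_le_mul_of_nonneg_right _ hsPB
          apply mul_le_mul hwj hwk (by positivity) (by positivity)
        refine step1.trans (le_of_eq ?_)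
        have hpow : (2:ℝ) ^ ((N:ℤ)) * (2:ℝ) ^ (2 * ((d:ℤ) - 1) * N) * ((2:ℝ) ^ ((N:ℤ))) ^ d *
            (((2:ℝ) ^ ((N:ℤ) - 2)) ^ m)⁻¹ * ((((2:ℝ) ^ (-((N:ℤ) + 1)))) ^ (d + 1))⁻¹
            = 2 ^ (d + 1) * 2 ^ (2 * m) * 2 ^ (4 * d * N) * ((2:ℝ) ^ (m * N))⁻¹ := by
          rw [← zpow_natCast ((2:ℝ) ^ ((N:ℤ))) d, ← zpow_mul,
            ← zpow_natCast ((2:ℝ) ^ ((N:ℤ) - 2)) m, ← zpow_mul,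
            ← zpow_natCast ((2:ℝ) ^ (-((N:ℤ) + 1))) (d + 1), ← zpow_mul,
            ← zpow_natCast (2:ℝ) (d + 1), ← zpow_natCast (2:ℝ) (2 * m),
            ← zpow_natCast (2:ℝ) (4 * d * N), ← zpow_natCast (2:ℝ) (m * N),
            ← zpow_neg, ← zpow_neg, ← zpow_neg]
          simp only [← zpow_add₀ h2ne]
          congr 1
          push_cast
          ring
        calc ((2:ℝ) ^ ((N:ℤ)) * (2:ℝ) ^ (2 * ((d:ℤ) - 1) * N)) * (s * PB)
            = (Vr + 1) * A ^ 3 * I *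
              ((2:ℝ) ^ ((N:ℤ)) * (2:ℝ) ^ (2 * ((d:ℤ) - 1) * N) * ((2:ℝ) ^ ((N:ℤ))) ^ d *
                (((2:ℝ) ^ ((N:ℤ) - 2)) ^ m)⁻¹ *
                ((((2:ℝ) ^ (-((N:ℤ) + 1)))) ^ (d + 1))⁻¹) := by
              rw [hs_def, hPB_def, ht_def]; ring
          _ = (Vr + 1) * A ^ 3 * I *
              (2 ^ (d + 1) * 2 ^ (2 * m) * 2 ^ (4 * d * N) * ((2:ℝ) ^ (m * N))⁻¹) := by
              rw [hpow]
          _ = (Vr + 1) * A ^ 3 * I * 2 ^ (d + 1) * 2 ^ (2 * m) *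
              2 ^ (4 * d * N) * ((2:ℝ) ^ (m * N))⁻¹ := by ring

lemma final_real_ineq {d N m : ℕ} (hd : 2 ≤ d) (hN : 2 ≤ N) (hm : m = 6 * d + 6)
    {δ Vr A I : ℝ} (hδ0 : 0 < δ) (hδ1 : δ < 1) (hVr0 : 0 ≤ Vr) (hA1 : 1 ≤ A) (hI0 : 0 ≤ I) :
    ((N:ℝ) + 1) ^ 2 * ((Vr + 1) * A ^ 3 * I * 2 ^ (d + 1) * 2 ^ (2 * m) *
        2 ^ (4 * d * N) * ((2:ℝ) ^ (m * N))⁻¹)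
      ≤ ((Vr + 1) * A ^ 3 * (I + 1) * 2 ^ (d + 1) * 2 ^ (2 * m)) *
        (2:ℝ) ^ (-((d:ℝ) * (1 - 2 * δ) * N)) := by
  have hA0 : (0:ℝ) ≤ A := by linarith
  have h1 : ((N:ℝ) + 1) ≤ 2 ^ N := by
    have := Nat.lt_two_pow_self (n := N)
    exact_mod_cast Nat.succ_le_of_lt this
  have hXY : ((N:ℝ) + 1) ^ 2 * 2 ^ (4 * d * N) * 2 ^ (d * N) ≤ 2 ^ (m * N) := by
    calc ((N:ℝ) + 1) ^ 2 * 2 ^ (4 * d * N) * 2 ^ (d * N)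
        ≤ ((2:ℝ) ^ N) ^ 2 * 2 ^ (4 * d * N) * 2 ^ (d * N) := by
          apply mul_le_mul_of_nonneg_right _ (by positivity)
          apply mul_le_mul_of_nonneg_right _ (by positivity)
          exact pow_le_pow_left₀ (by positivity) h1 2
      _ = (2:ℝ) ^ (N * 2 + 4 * d * N + d * N) := by rw [← pow_mul, ← pow_add, ← pow_add]
      _ ≤ (2:ℝ) ^ (m * N) := pow_le_pow_right₀ one_le_two (by subst hm; nlinarith)
  have h2 : ((N:ℝ) + 1) ^ 2 * 2 ^ (4 * d * N) * ((2:ℝ) ^ (m * N))⁻¹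
      ≤ ((2:ℝ) ^ (d * N))⁻¹ := by
    have h2p : (0:ℝ) < 2 ^ (m * N) := by positivity
    have h3p : (0:ℝ) < 2 ^ (d * N) := by positivity
    rw [← div_eq_mul_inv, inv_eq_one_div, div_le_div_iff₀ h2p h3p]
    linarith
  have h3 : ((2:ℝ) ^ (d * N))⁻¹ ≤ (2:ℝ) ^ (-((d:ℝ) * (1 - 2 * δ) * N)) := by
    have he : ((2:ℝ) ^ (d * N))⁻¹ = (2:ℝ) ^ (-(((d * N : ℕ)):ℝ)) := by
      rw [Real.rpow_neg (by norm_num), Real.rpow_natCast]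
    rw [he]
    apply Real.rpow_le_rpow_of_exponent_le one_le_two
    push_cast
    nlinarith [mul_nonneg (Nat.cast_nonneg (α := ℝ) d) (Nat.cast_nonneg (α := ℝ) N), hδ0.le]
  calc ((N:ℝ) + 1) ^ 2 * ((Vr + 1) * A ^ 3 * I * 2 ^ (d + 1) * 2 ^ (2 * m) *
        2 ^ (4 * d * N) * ((2:ℝ) ^ (m * N))⁻¹)
      = ((Vr + 1) * A ^ 3 * I * 2 ^ (d + 1) * 2 ^ (2 * m)) *
        (((N:ℝ) + 1) ^ 2 * 2 ^ (4 * d * N) * ((2:ℝ) ^ (m * N))⁻¹) := by ring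
    _ ≤ ((Vr + 1) * A ^ 3 * (I + 1) * 2 ^ (d + 1) * 2 ^ (2 * m)) *
        (2:ℝ) ^ (-((d:ℝ) * (1 - 2 * δ) * N)) := by
        apply mul_le_mul _ (h2.trans h3) (by positivity) (by positivity)
        have : (0:ℝ) ≤ (Vr + 1) * A ^ 3 * 2 ^ (d + 1) * 2 ^ (2 * m) := by positivity
        nlinarith


/-- Lemma A.1, estimate (A.4). -/
theorem offdiagonal_estimate_three (d : ℕ) (hd : 2 ≤ d) (δ : ℝ) (hδ0 : 0 < δ) (hδ1 : δ < 1)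
    (φ0 : SchwartzMap (Eu d) ℂ)
    (hsupp : Function.support (𝓕 ⇑φ0) ⊆ {ξ : Eu d | 1 / 2 ≤ ‖ξ‖ ∧ ‖ξ‖ ≤ 2})
    (hsum : ∀ ξ : Eu d, ξ ≠ 0 → HasSum (fun j : ℤ => 𝓕 (LP (⇑φ0) j) ξ) 1) :
    ∃ C : ℝ, 0 < C ∧ ∀ N : ℕ, 2 ≤ N →
      ∑ j ∈ jSet δ N, ∑ k ∈ (jSet δ N).erase j,
          ENNReal.ofReal ((2 : ℝ) ^ (-j) * (2 : ℝ) ^ (-2 * ((d : ℤ) - 1) * k)) *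
            eLpNorm
              (conv (LP (⇑φ0) j) fun x =>
                LP (⇑φ0) k (x - shift d N k) ^ 2 *
                  ((Real.sin ((2 : ℝ) ^ N * x1 x) : ℝ) : ℂ) ^ 2)
              d (volume.restrict (Metric.closedBall (shift d N j) ((2 : ℝ) ^ (-j)))) ≤
        ENNReal.ofReal (C * (2 : ℝ) ^ (-((d : ℝ) * (1 - 2 * δ) * N))) := by
  have hd1 : 1 ≤ d := by omega
  set m : ℕ := 6 * d + 6 with hm_def
  have hm : d + 1 ≤ m := by omega
  obtain ⟨A, hA1, hA⟩ := schwartz_decay_bound φ0 (2 * m)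
  have hA0 : (0:ℝ) ≤ A := by linarith
  set Vr : ℝ := (volume (Metric.ball (0:Eu d) 1)).toReal with hVr_def
  have hVr0 : 0 ≤ Vr := ENNReal.toReal_nonneg
  set I : ℝ := ∫ y : Eu d, (((1:ℝ) + ‖y‖) ^ (d + 1))⁻¹ with hI_def
  have hI0 : 0 ≤ I := integral_nonneg fun y => by positivity
  refine ⟨(Vr + 1) * A ^ 3 * (I + 1) * 2 ^ (d + 1) * 2 ^ (2 * m), by positivity,
    fun N hN => ?_⟩
  set TB : ℝ := (Vr + 1) * A ^ 3 * I * 2 ^ (d + 1) * 2 ^ (2 * m) *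
      2 ^ (4 * d * N) * ((2:ℝ) ^ (m * N))⁻¹ with hTB_def
  have hTB0 : 0 ≤ TB := by positivity
  have hmem : ∀ j ∈ jSet δ N, -(N:ℤ) ≤ j ∧ j ≤ 0 := by
    intro j hj
    rw [jSet, Finset.mem_Icc] at hj
    refine ⟨le_trans ?_ hj.1, hj.2⟩
    have h0 : -((N:ℝ)) ≤ -(δ * N) := by nlinarith [Nat.cast_nonneg (α := ℝ) N]
    have h3 : ((-(N:ℤ) : ℤ) : ℝ) ≤ (⌈-(δ * (N:ℝ))⌉ : ℝ) := by
      push_cast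
      linarith [Int.le_ceil (-(δ * (N:ℝ)))]
    exact_mod_cast h3
  have hcard : (jSet δ N).card ≤ N + 1 := by
    rw [jSet, Int.card_Icc]
    have h1 : -(N:ℤ) ≤ ⌈-(δ * (N:ℝ))⌉ := by
      have h0 : -((N:ℝ)) ≤ -(δ * N) := by nlinarith [Nat.cast_nonneg (α := ℝ) N]
      have h3 : ((-(N:ℤ) : ℤ) : ℝ) ≤ (⌈-(δ * (N:ℝ))⌉ : ℝ) := by
        push_cast
        linarith [Int.le_ceil (-(δ * (N:ℝ)))]
      exact_mod_cast h3
    omega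
  have hsum1 : ∀ j ∈ jSet δ N,
      (∑ k ∈ (jSet δ N).erase j,
        ENNReal.ofReal ((2 : ℝ) ^ (-j) * (2 : ℝ) ^ (-2 * ((d : ℤ) - 1) * k)) *
          eLpNorm
            (conv (LP (⇑φ0) j) fun x =>
              LP (⇑φ0) k (x - shift d N k) ^ 2 *
                ((Real.sin ((2 : ℝ) ^ N * x1 x) : ℝ) : ℂ) ^ 2)
            d (volume.restrict (Metric.closedBall (shift d N j) ((2 : ℝ) ^ (-j)))))
        ≤ ((N + 1 : ℕ) : ℝ≥0∞) * ENNReal.ofReal TB := by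
    intro j hjmem
    obtain ⟨hjN, hj0⟩ := hmem j hjmem
    have hinner : ∀ k ∈ (jSet δ N).erase j,
        ENNReal.ofReal ((2 : ℝ) ^ (-j) * (2 : ℝ) ^ (-2 * ((d : ℤ) - 1) * k)) *
          eLpNorm
            (conv (LP (⇑φ0) j) fun x =>
              LP (⇑φ0) k (x - shift d N k) ^ 2 *
                ((Real.sin ((2 : ℝ) ^ N * x1 x) : ℝ) : ℂ) ^ 2)
            d (volume.restrict (Metric.closedBall (shift d N j) ((2 : ℝ) ^ (-j))))
          ≤ ENNReal.ofReal TB := by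
      intro k hkmem
      obtain ⟨hkN, hk0⟩ := hmem k (Finset.mem_of_mem_erase hkmem)
      have hne : j ≠ k := (Finset.ne_of_mem_erase hkmem).symm
      exact per_term_bound hd φ0 hA1 hm hA hN hjN hj0 hkN hk0 hne
    calc _ ≤ ((jSet δ N).erase j).card • ENNReal.ofReal TB :=
          Finset.sum_le_card_nsmul _ _ _ hinner
      _ = (((jSet δ N).erase j).card : ℝ≥0∞) * ENNReal.ofReal TB := by
          rw [nsmul_eq_mul]
      _ ≤ ((N + 1 : ℕ) : ℝ≥0∞) * ENNReal.ofReal TB := by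
          apply mul_le_mul_left
          exact_mod_cast le_trans (Finset.card_erase_le) hcard
  calc ∑ j ∈ jSet δ N, ∑ k ∈ (jSet δ N).erase j,
        ENNReal.ofReal ((2 : ℝ) ^ (-j) * (2 : ℝ) ^ (-2 * ((d : ℤ) - 1) * k)) *
          eLpNorm
            (conv (LP (⇑φ0) j) fun x =>
              LP (⇑φ0) k (x - shift d N k) ^ 2 *
                ((Real.sin ((2 : ℝ) ^ N * x1 x) : ℝ) : ℂ) ^ 2)
            d (volume.restrict (Metric.closedBall (shift d N j) ((2 : ℝ) ^ (-j))))
      ≤ ∑ _j ∈ jSet δ N, ((N + 1 : ℕ) : ℝ≥0∞) * ENNReal.ofReal TB :=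
        Finset.sum_le_sum hsum1
    _ = ((jSet δ N).card : ℝ≥0∞) * (((N + 1 : ℕ) : ℝ≥0∞) * ENNReal.ofReal TB) := by
        rw [Finset.sum_const, nsmul_eq_mul]
    _ ≤ ((N + 1 : ℕ) : ℝ≥0∞) * (((N + 1 : ℕ) : ℝ≥0∞) * ENNReal.ofReal TB) := by
        apply mul_le_mul_left
        exact_mod_cast hcard
    _ = ENNReal.ofReal (((N:ℝ) + 1) ^ 2 * TB) := by
        rw [← ENNReal.ofReal_natCast (N + 1), ← ENNReal.ofReal_mul (by positivity),
          ← ENNReal.ofReal_mul (by positivity)]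
        congr 1
        push_cast
        ring
    _ ≤ ENNReal.ofReal (((Vr + 1) * A ^ 3 * (I + 1) * 2 ^ (d + 1) * 2 ^ (2 * m)) *
          (2 : ℝ) ^ (-((d : ℝ) * (1 - 2 * δ) * N))) := by
        apply ENNReal.ofReal_le_ofReal
        rw [hTB_def]
        exact final_real_ineq hd hN hm_def hδ0 hδ1 hVr0 hA1 hI0


end Paper
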